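/- Let m ≥ 1, n ≥ 1, r ≥ 1 be natural numbers, let κ₀ ≥ 0 be real, and let S : Fin m → Fin m → Fin m → Fin m → ℂ be such that for every Hermitian positive semidefinite matrix ξ : Matrix (Fin m) (Fin m) ℂ one has Re (∑_{α,β,γ,δ} S α β γ δ · ξ α β · ξ γ δ) ≤ − κ₀ · ∑_{α,β} ‖ξ α β‖². Let F : Matrix (Fin n) (Fin m) ℂ have rank at most r, and define ξ α β := ∑_p F p α · conj (F p β). Then Re (∑_{α,β,γ,δ} S α β γ δ · ξ α β · ξ γ δ) ≤ − (κ₀ / r) · (∑_{p,α} ‖F p α‖²)². -/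

import Mathlib

/-!
The tensor `ξ = Fᵀ (Fᵀ)ᴴ` is a positive semidefinite Gram matrix with `rank ξ = rank F ≤ r` and
`tr ξ = |∂f|²`. For a Hermitian matrix with eigenvalues `λᵢ` the trace is `∑ λᵢ`, the squared
Frobenius norm is `∑ λᵢ²`, and only `rank`-many `λᵢ` are nonzero, so Cauchy–Schwarz gives
`(tr ξ)² ≤ rank ξ · ∑ |ξ_{αβ̄}|²`. Inserting this into the curvature bound gives the estimate.
-/

open scoped ComplexOrder Matrix

namespace Matrix

variable {m n 𝕜 : Type*} [Fintype m] [Fintype n] [RCLike 𝕜]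

theorem re_trace_mul_conjTranspose_self (A : Matrix m n 𝕜) :
    RCLike.re (A * Aᴴ).trace = ∑ i, ∑ j, ‖A i j‖ ^ 2 := by
  simp only [trace, diag_apply, mul_apply, conjTranspose_apply, RCLike.star_def, RCLike.mul_conj,
    map_sum]
  norm_cast

namespace IsHermitian

variable [DecidableEq n] {A : Matrix n n 𝕜} (hA : A.IsHermitian)
include hA

theorem trace_mul_self : (A * A).trace = ∑ i, (hA.eigenvalues i : 𝕜) ^ 2 := by
  conv_lhs => rw [hA.spectral_theorem]
  rw [← map_mul, Unitary.conjStarAlgAut_apply, trace_mul_cycle, Unitary.coe_star_mul_self,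
    one_mul, diagonal_mul_diagonal, trace_diagonal]
  simp [sq]

theorem sum_norm_sq_eq_sum_eigenvalues_sq :
    ∑ i, ∑ j, ‖A i j‖ ^ 2 = ∑ i, hA.eigenvalues i ^ 2 := by
  rw [← re_trace_mul_conjTranspose_self, hA.eq, hA.trace_mul_self]
  norm_cast

theorem re_trace_eq_sum_eigenvalues : RCLike.re A.trace = ∑ i, hA.eigenvalues i := by
  rw [hA.trace_eq_sum_eigenvalues]
  norm_cast

theorem re_trace_sq_le_rank_mul_sum_norm_sq :
    RCLike.re A.trace ^ 2 ≤ A.rank * ∑ i, ∑ j, ‖A i j‖ ^ 2 := by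
  classical
  set s := Finset.univ.filter (hA.eigenvalues · ≠ 0)
  have hrank : A.rank = s.card := by
    rw [hA.rank_eq_card_non_zero_eigs, Fintype.card_subtype]
  rw [hA.re_trace_eq_sum_eigenvalues, hA.sum_norm_sq_eq_sum_eigenvalues_sq, hrank,
    ← Finset.sum_filter_ne_zero]
  calc (∑ i ∈ s, hA.eigenvalues i) ^ 2 ≤ (s.card : ℝ) * ∑ i ∈ s, hA.eigenvalues i ^ 2 :=
        sq_sum_le_card_mul_sum_sq
    _ ≤ s.card * ∑ i, hA.eigenvalues i ^ 2 := by
        gcongr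
        exact s.subset_univ

end IsHermitian

theorem sq_sum_norm_sq_le_rank_mul_sum_norm_sq_mul_conjTranspose_self [DecidableEq m]
    (A : Matrix m n 𝕜) :
    (∑ i, ∑ j, ‖A i j‖ ^ 2) ^ 2 ≤ A.rank * ∑ i, ∑ j, ‖(A * Aᴴ) i j‖ ^ 2 := by
  have h := (isHermitian_mul_conjTranspose_self A).re_trace_sq_le_rank_mul_sum_norm_sq
  rwa [re_trace_mul_conjTranspose_self, rank_self_mul_conjTranspose] at h

end Matrix

theorem target_curvature_estimate_general (m n r : ℕ)
    (κ₀ : ℝ) (hκ : 0 ≤ κ₀)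
    (S : Fin m → Fin m → Fin m → Fin m → ℂ)
    (hS : ∀ ξ : Matrix (Fin m) (Fin m) ℂ, ξ.PosSemidef →
      (∑ α : Fin m, ∑ β : Fin m, ∑ γ : Fin m, ∑ δ : Fin m,
        S α β γ δ * ξ α β * ξ γ δ).re
      ≤ - κ₀ * ∑ α : Fin m, ∑ β : Fin m, ‖ξ α β‖^2)
    (F : Matrix (Fin n) (Fin m) ℂ) (hF : F.rank ≤ r)
    (ξ : Matrix (Fin m) (Fin m) ℂ)
    (hξ : ∀ α β : Fin m, ξ α β = ∑ p : Fin n, F p α * (starRingEnd ℂ) (F p β)) :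
    (∑ α : Fin m, ∑ β : Fin m, ∑ γ : Fin m, ∑ δ : Fin m,
        S α β γ δ * ξ α β * ξ γ δ).re
      ≤ - (κ₀ / r) * (∑ p : Fin n, ∑ α : Fin m, ‖F p α‖^2)^2 := by
  have hξ_gram : ξ = Fᵀ * Fᵀᴴ := by
    ext α β
    simp [hξ, Matrix.mul_apply]
  set N := ∑ α, ∑ β, ‖ξ α β‖ ^ 2
  set T := ∑ p, ∑ α, ‖F p α‖ ^ 2
  have hT : T ^ 2 ≤ r * N := by
    have h := Matrix.sq_sum_norm_sq_le_rank_mul_sum_norm_sq_mul_conjTranspose_self Fᵀ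
    rw [Matrix.rank_transpose, ← hξ_gram, Finset.sum_comm] at h
    exact h.trans (by gcongr)
  have hκT : κ₀ / r * T ^ 2 ≤ κ₀ * N :=
    calc κ₀ / r * T ^ 2 ≤ κ₀ / r * (r * N) := by gcongr
      _ = κ₀ * N * (r / r) := by ring
      _ ≤ κ₀ * N := mul_le_of_le_one_right (by positivity) (div_self_le_one _)
  have hξ_psd : ξ.PosSemidef := hξ_gram ▸ Matrix.posSemidef_self_mul_conjTranspose Fᵀ
  linarith [hS ξ hξ_psd]

/-- Target-curvature estimate in the proof of Theorem 1.2: if the curvature form of `S` is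
bounded above by `−κ₀ |ξ|²` on Hermitian positive semidefinite tensors, then evaluating it
on `ξ = Fᵀ · conj F` for a matrix `F` of rank at most `r` yields the bound
`−(κ₀/r) |∂f|⁴`. -/
theorem target_curvature_estimate (m n r : ℕ) (hm : 1 ≤ m) (hn : 1 ≤ n) (hr : 1 ≤ r)
    (κ₀ : ℝ) (hκ : 0 ≤ κ₀)
    (S : Fin m → Fin m → Fin m → Fin m → ℂ)
    (hS : ∀ ξ : Matrix (Fin m) (Fin m) ℂ, ξ.PosSemidef →
      (∑ α : Fin m, ∑ β : Fin m, ∑ γ : Fin m, ∑ δ : Fin m,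
        S α β γ δ * ξ α β * ξ γ δ).re
      ≤ - κ₀ * ∑ α : Fin m, ∑ β : Fin m, ‖ξ α β‖^2)
    (F : Matrix (Fin n) (Fin m) ℂ) (hF : F.rank ≤ r)
    (ξ : Matrix (Fin m) (Fin m) ℂ)
    (hξ : ∀ α β : Fin m, ξ α β = ∑ p : Fin n, F p α * (starRingEnd ℂ) (F p β)) :
    (∑ α : Fin m, ∑ β : Fin m, ∑ γ : Fin m, ∑ δ : Fin m,
        S α β γ δ * ξ α β * ξ γ δ).re
      ≤ - (κ₀ / r) * (∑ p : Fin n, ∑ α : Fin m, ‖F p α‖^2)^2 :=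
  target_curvature_estimate_general m n r κ₀ hκ S hS F hF ξ hξ
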